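/- Let A be a Perron-like real m×m matrix with principal eigenvalue s, let δ > 0 satisfy Re μ ≤ s − 2δ for every complex eigenvalue μ ≠ s of A, let ν be the cyclic order of GE_s(A), Π₁ the spectral projection onto GE_s(A), and d an integer with ν − 1 ≤ d ≤ m − 1. Then there exists a constant C > 0 such that for every real m×m matrix V, every real number Δs with |Δs| < δ/3, and every t ≥ 0 with t·|Δs| ≤ 1, the following hold with s̄ = s + Δs, Y = Π₁V, P̄(t) = Σ_{k=0}^d (−1)^k (t^k/k!) (A − s̄I)^k, X̄(t) = e^{t(A−s̄I)}V, Ỹ(t) = P̄(t)·X̄(t), and Ȳ(t) = P̄(t)·e^{t(A−s̄I)}Y: (i) ‖Ỹ(t) − Ȳ(t)‖ ≤ C·‖V‖·(1 + t^d)·e^{−(2/3)δt}, and (ii) ‖Ȳ(t) − Y‖ ≤ C·‖V‖·(1 + t^{d+ν})·|Δs|. -/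

import Mathlib

open Matrix

/-- Matrix exponential of a real square matrix. -/
noncomputable def mexp {m : ℕ} (M : Matrix (Fin m) (Fin m) ℝ) : Matrix (Fin m) (Fin m) ℝ :=
  NormedSpace.exp M

/-- Frobenius norm of a real square matrix. -/
noncomputable def fnorm {m : ℕ} (M : Matrix (Fin m) (Fin m) ℝ) : ℝ :=
  Real.sqrt (∑ i, ∑ j, (M i j) ^ 2)

/-- Euclidean norm of a vector in ℝ^m. -/
noncomputable def vnorm {m : ℕ} (x : Fin m → ℝ) : ℝ :=
  Real.sqrt (∑ i, (x i) ^ 2)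

/-- Frobenius inner product ⟨M, N⟩ = trace(Mᵀ N). -/
def finner {m : ℕ} (M N : Matrix (Fin m) (Fin m) ℝ) : ℝ :=
  ∑ i, ∑ j, M i j * N i j

/-- The generalized eigenspace GE_s(A) = {x : (A - s•I)^k x = 0 for some k ≥ 1},
as a submodule of ℝ^m. -/
def GEsub {m : ℕ} (A : Matrix (Fin m) (Fin m) ℝ) (s : ℝ) : Submodule ℝ (Fin m → ℝ) where
  carrier := {x | ∃ k : ℕ, 1 ≤ k ∧ ((A - s • 1) ^ k).mulVec x = 0}
  zero_mem' := ⟨1, le_refl 1, Matrix.mulVec_zero _⟩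
  add_mem' := by
    rintro a b ⟨k, hk, ha⟩ ⟨l, hl, hb⟩
    refine ⟨max k l, le_trans hk (le_max_left _ _), ?_⟩
    have h1 : ((A - s • 1) ^ (max k l)).mulVec a = 0 := by
      have h : (A - s • 1) ^ (max k l) = (A - s • 1) ^ (max k l - k) * (A - s • 1) ^ k := by
        rw [← pow_add]; congr 1; omega
      rw [h, ← Matrix.mulVec_mulVec, ha, Matrix.mulVec_zero]
    have h2 : ((A - s • 1) ^ (max k l)).mulVec b = 0 := by
      have h : (A - s • 1) ^ (max k l) = (A - s • 1) ^ (max k l - l) * (A - s • 1) ^ l := by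
        rw [← pow_add]; congr 1; omega
      rw [h, ← Matrix.mulVec_mulVec, hb, Matrix.mulVec_zero]
    rw [Matrix.mulVec_add, h1, h2, add_zero]
  smul_mem' := by
    rintro c a ⟨k, hk, ha⟩
    exact ⟨k, hk, by rw [Matrix.mulVec_smul, ha, smul_zero]⟩

/-!
Write `N = A - s • 1` and `Q = 1 - P`. Since `N ^ ν * P = 0`, `e^{tN} P` is a polynomial of degree
`ν - 1` in `t`, and the truncated exponential `P̄` of `-tN`, of degree `d ≥ ν - 1`, inverts it
exactly. Replacing `s` by `s + Δs` multiplies `e^{tN}` by `e^{-tΔs}` and moves `P̄` by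
`O(|Δs| (1 + t^d))`, which gives (ii).

For (i), `e^{tN} Q = e^{tM} Q` with `M = N Q + c P` for any real `c`. An eigenvector `v` of `M`
has eigenvalue `c` if `P v ≠ 0`, and is otherwise an eigenvector of `N` with a nonzero eigenvalue,
because the kernel of `N` lies in `GE_s(A) = range P`. So the gap hypothesis puts the spectrum of
`M` in `Re μ < -δ`, and splitting the matrix algebra into generalised eigenspaces of left
multiplication by `M` gives `‖e^{tM}‖ = O(e^{-δt})`. The factor `e^{-tΔs} ≤ e^{δt/3}` leaves the
rate `2δ/3`.
-/

open Asymptotics Filter NormedSpace Finset Set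
open scoped Nat

theorem pow_le_one_add_pow {t : ℝ} (ht : 0 ≤ t) {k n : ℕ} (hk : k ≤ n) : t ^ k ≤ 1 + t ^ n := by
  rcases le_total t 1 with h | h
  · linarith [pow_le_one₀ ht h (n := k), pow_nonneg ht n]
  · linarith [pow_le_pow_right₀ h hk]

theorem one_add_pow_mul_one_add_pow_le {t : ℝ} (ht : 0 ≤ t) {a b n : ℕ} (hab : a + b ≤ n) :
    (1 + t ^ a) * (1 + t ^ b) ≤ 4 * (1 + t ^ n) := by
  have ha := pow_le_one_add_pow ht (n := n) (k := a) (by omega)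
  have hb := pow_le_one_add_pow ht (n := n) (k := b) (by omega)
  have hab' := pow_le_one_add_pow ht hab
  rw [pow_add] at hab'
  nlinarith [pow_nonneg ht n]

theorem isBigO_pow_div_factorial {α : Type*} {l : Filter α} (τ : α → ℝ) {k n : ℕ} (hk : k ≤ n) :
    (fun a => τ a ^ k / k !) =O[l] fun a => 1 + ‖τ a‖ ^ n := by
  refine isBigO_of_le l fun a => ?_
  have h1 : ‖1 + ‖τ a‖ ^ n‖ = 1 + ‖τ a‖ ^ n := Real.norm_of_nonneg (by positivity)
  rw [norm_div, norm_pow, Real.norm_natCast, h1]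
  calc ‖τ a‖ ^ k / k ! ≤ ‖τ a‖ ^ k :=
        div_le_self (by positivity) (by exact_mod_cast k.factorial_pos)
    _ ≤ 1 + ‖τ a‖ ^ n := pow_le_one_add_pow (norm_nonneg _) hk

theorem isBigO_pow_exp_mul {ε : ℝ} (hε : 0 < ε) (k : ℕ) :
    (fun t : ℝ => t ^ k) =O[𝓟 (Ici 0)] fun t => Real.exp (ε * t) := by
  refine isBigO_principal.2 ⟨k ! / ε ^ k, fun t (ht : 0 ≤ t) => ?_⟩
  have h := Real.pow_div_factorial_le_exp (ε * t) (by positivity) k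
  rw [mul_pow, div_le_iff₀ (by positivity)] at h
  rw [Real.norm_of_nonneg (by positivity), Real.norm_of_nonneg (Real.exp_nonneg _),
    div_mul_eq_mul_div, le_div_iff₀ (by positivity)]
  linarith

theorem isBigO_sum_pow_smul {E : Type*} [NormedAddCommGroup E] [NormedSpace ℂ E] {ε : ℝ}
    (hε : 0 < ε) (k : ℕ) (c : ℕ → E) :
    (fun t : ℝ => ∑ j ∈ range k, (t : ℂ) ^ j • c j) =O[𝓟 (Ici 0)] fun t => Real.exp (ε * t) := by
  refine IsBigO.fun_sum fun j _ => ?_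
  have hpow : (fun t : ℝ => (t : ℂ) ^ j) =O[𝓟 (Ici 0)] fun t => Real.exp (ε * t) :=
    (isBigO_of_le _ fun t => by simp).trans (isBigO_pow_exp_mul hε j)
  simpa using hpow.smul (isBigO_const_const (c j) (one_ne_zero (α := ℝ)) (𝓟 (Ici 0)))

theorem pow_mul_eq_pow_mul_of_mul_eq {M : Type*} [Monoid M] {X Y Q : M} (hXQ : Commute X Q)
    (h : Y * Q = X * Q) (k : ℕ) : Y ^ k * Q = X ^ k * Q := by
  induction k with
  | zero => simp
  | succ k ih => rw [pow_succ, mul_assoc, h, hXQ.eq, ← mul_assoc, ih, mul_assoc, ← hXQ.eq,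
      ← mul_assoc, ← pow_succ]

noncomputable def expTrunc {𝔸 : Type*} [Ring 𝔸] [Module ℝ 𝔸] (d : ℕ) (X : 𝔸) : 𝔸 :=
  ∑ k ∈ range (d + 1), (k ! : ℝ)⁻¹ • X ^ k

theorem expTrunc_smul {𝔸 : Type*} [Ring 𝔸] [Algebra ℝ 𝔸] (d : ℕ) (τ : ℝ) (X : 𝔸) :
    expTrunc d (τ • X) = ∑ k ∈ range (d + 1), (τ ^ k / k !) • X ^ k := by
  refine sum_congr rfl fun k _ => ?_
  rw [smul_pow, smul_smul, inv_mul_eq_div]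

theorem expTrunc_neg_smul {𝔸 : Type*} [Ring 𝔸] [Algebra ℝ 𝔸] (d : ℕ) (t : ℝ) (X : 𝔸) :
    expTrunc d ((-t) • X) = ∑ k ∈ range (d + 1), ((-1) ^ k * t ^ k / k !) • X ^ k := by
  rw [expTrunc_smul]
  exact sum_congr rfl fun k _ => by rw [neg_pow t]

section NormedAlgebra

variable {α 𝔸 : Type*} [NormedRing 𝔸] {l : Filter α}

theorem isBigO_pow_sub_pow {X Y : α → 𝔸} (hX : X =O[l] fun _ => (1 : ℝ))
    (hY : Y =O[l] fun _ => (1 : ℝ)) (hXY : ∀ a, Commute (X a) (Y a)) (k : ℕ) :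
    (fun a => X a ^ k - Y a ^ k) =O[l] fun a => ‖X a - Y a‖ := by
  have hsum : (fun a => ∑ i ∈ range k, X a ^ i * Y a ^ (k - 1 - i)) =O[l] fun _ => (1 : ℝ) :=
    IsBigO.fun_sum fun i _ => by simpa using (hX.pow i).mul (hY.pow (k - 1 - i))
  have h := hsum.mul (isBigO_norm_right.2 (isBigO_refl (fun a => X a - Y a) l))
  simp only [one_mul, (hXY _).geom_sum₂_mul] at h
  exact h

variable [NormedAlgebra ℝ 𝔸]

theorem isBigO_expTrunc_smul {X : α → 𝔸} (hX : X =O[l] fun _ => (1 : ℝ)) (τ : α → ℝ) (d : ℕ) :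
    (fun a => expTrunc d (τ a • X a)) =O[l] fun a => 1 + ‖τ a‖ ^ d := by
  simp_rw [expTrunc_smul]
  refine IsBigO.fun_sum fun k hk => ?_
  simpa using (isBigO_pow_div_factorial τ (Nat.lt_succ_iff.1 (mem_range.1 hk))).smul (hX.pow k)

theorem isBigO_expTrunc_smul_sub {X Y : α → 𝔸} (hX : X =O[l] fun _ => (1 : ℝ))
    (hY : Y =O[l] fun _ => (1 : ℝ)) (hXY : ∀ a, Commute (X a) (Y a)) (τ : α → ℝ) (d : ℕ) :
    (fun a => expTrunc d (τ a • X a) - expTrunc d (τ a • Y a)) =O[l]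
      fun a => (1 + ‖τ a‖ ^ d) * ‖X a - Y a‖ := by
  simp_rw [expTrunc_smul, ← sum_sub_distrib, ← smul_sub]
  exact IsBigO.fun_sum fun k hk =>
    (isBigO_pow_div_factorial τ (Nat.lt_succ_iff.1 (mem_range.1 hk))).smul
      (isBigO_pow_sub_pow hX hY hXY k)

end NormedAlgebra

section Spectrum

variable {n : Type*} [Fintype n]

theorem Matrix.map_ofReal_mulVec_eq_zero_iff {m : Type*} {X : Matrix m n ℝ} {v : n → ℂ} :
    X.map Complex.ofReal *ᵥ v = 0 ↔
      X *ᵥ (fun i => (v i).re) = 0 ∧ X *ᵥ (fun i => (v i).im) = 0 := by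
  simp only [funext_iff, Pi.zero_apply, Complex.ext_iff, mulVec, dotProduct, map_apply,
    Complex.re_sum, Complex.im_sum, Complex.mul_re, Complex.mul_im, Complex.ofReal_re,
    Complex.ofReal_im, zero_mul, sub_zero, add_zero, Complex.zero_re, Complex.zero_im]
  exact forall_and

variable [DecidableEq n]

theorem Matrix.mem_spectrum_iff_exists_mulVec_eq_smul {K : Type*} [Field K] {A : Matrix n n K}
    {μ : K} : μ ∈ spectrum K A ↔ ∃ v ≠ 0, A *ᵥ v = μ • v := by
  rw [← Matrix.spectrum_toLin', ← Module.End.hasEigenvalue_iff_mem_spectrum,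
    Module.End.hasEigenvalue_iff, Submodule.ne_bot_iff]
  simp [and_comm]

theorem Matrix.eq_or_mem_spectrum_of_mem_spectrum_mul_one_sub_add_smul {K : Type*} [Field K]
    {N P : Matrix n n K} (hP : IsIdempotentElem P) (hNP : Commute N P)
    (hker : ∀ v, N *ᵥ v = 0 → (1 - P) *ᵥ v = 0) {c μ : K}
    (hμ : μ ∈ spectrum K (N * (1 - P) + c • P)) : μ = c ∨ μ ≠ 0 ∧ μ ∈ spectrum K N := by
  obtain ⟨v, hv0, hv⟩ := Matrix.mem_spectrum_iff_exists_mulVec_eq_smul.1 hμ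
  have hPM : P * (N * (1 - P) + c • P) = c • P := by
    rw [mul_add, ← mul_assoc, ← hNP.eq, mul_assoc, hP.mul_one_sub_self, mul_zero, zero_add,
      mul_smul_comm, hP.eq]
  have hPv : μ • (P *ᵥ v) = c • (P *ᵥ v) := by
    rw [← mulVec_smul, ← hv, mulVec_mulVec, hPM, smul_mulVec]
  by_cases h : P *ᵥ v = 0
  · have hQv : (1 - P) *ᵥ v = v := by rw [sub_mulVec, one_mulVec, h, sub_zero]
    have hNv : N *ᵥ v = μ • v := by
      rw [← hv, add_mulVec, smul_mulVec, h, smul_zero, add_zero, ← mulVec_mulVec, hQv]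
    refine .inr ⟨fun hμ0 => hv0 ?_, Matrix.mem_spectrum_iff_exists_mulVec_eq_smul.2 ⟨v, hv0, hNv⟩⟩
    rw [← hQv, hker v (by rw [hNv, hμ0, zero_smul])]
  · exact .inl (smul_left_injective K h hPv)

theorem Matrix.add_mem_spectrum_map_of_mem_spectrum_map_sub {A : Matrix n n ℝ} {s : ℝ} {μ : ℂ}
    (h : μ ∈ spectrum ℂ ((A - s • 1).map Complex.ofReal)) :
    μ + s ∈ spectrum ℂ (A.map Complex.ofReal) := by
  have hmap : (A - s • 1).map Complex.ofReal = A.map Complex.ofReal - algebraMap ℂ _ (s : ℂ) := by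
    ext i j
    simp [Algebra.algebraMap_eq_smul_one, Matrix.one_apply, apply_ite Complex.ofReal]
  rw [hmap, ← spectrum.sub_singleton_eq] at h
  obtain ⟨x, hx, y, rfl, rfl⟩ := h
  simpa using hx

theorem Matrix.re_lt_of_mem_spectrum_map_sub_smul_one {A : Matrix n n ℝ} {s δ : ℝ} (hδ : 0 < δ)
    (hgap : ∀ μ ∈ spectrum ℂ (A.map Complex.ofReal), μ ≠ (s : ℂ) → μ.re ≤ s - 2 * δ) (μ : ℂ)
    (hμ : μ ∈ spectrum ℂ ((A - s • 1).map Complex.ofReal)) (h0 : μ ≠ 0) : μ.re < -δ := by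
  have h := hgap _ (Matrix.add_mem_spectrum_map_of_mem_spectrum_map_sub hμ) (by simpa using h0)
  simp only [Complex.add_re, Complex.ofReal_re] at h
  linarith

end Spectrum

section GeneralizedEigenspace

variable {m : ℕ} {A P : Matrix (Fin m) (Fin m) ℝ} {s : ℝ}

theorem pow_sub_smul_one_mul_eq_zero_of_range_eq_GEsub {ν : ℕ}
    (hann : ∀ x ∈ GEsub A s, ((A - s • 1) ^ ν).mulVec x = 0)
    (hPrange : Set.range P.mulVec = (GEsub A s : Set (Fin m → ℝ))) :
    (A - s • 1) ^ ν * P = 0 := by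
  refine Matrix.ext_iff_mulVec.2 fun x => ?_
  rw [zero_mulVec, ← mulVec_mulVec]
  refine hann _ ?_
  rw [← SetLike.mem_coe, ← hPrange]
  exact ⟨x, rfl⟩

theorem one_sub_mulVec_eq_zero_of_range_eq_GEsub (hPidem : P * P = P)
    (hPrange : Set.range P.mulVec = (GEsub A s : Set (Fin m → ℝ))) (v : Fin m → ℝ)
    (hv : (A - s • 1) *ᵥ v = 0) : (1 - P) *ᵥ v = 0 := by
  obtain ⟨y, rfl⟩ : v ∈ Set.range P.mulVec := by
    rw [hPrange]
    exact ⟨1, le_rfl, by rwa [pow_one]⟩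
  rw [mulVec_mulVec, sub_mul, one_mul, hPidem, sub_self, zero_mulVec]

end GeneralizedEigenspace

/-- The pairs `(Δs, t)` of the theorem. -/
def shiftDomain (δ : ℝ) : Set (ℝ × ℝ) := {p | |p.1| < δ / 3 ∧ 0 ≤ p.2 ∧ p.2 * |p.1| ≤ 1}

theorem isBigO_exp_neg_mul_shiftDomain (δ : ℝ) :
    (fun p : ℝ × ℝ => Real.exp (-(p.2 * p.1))) =O[𝓟 (shiftDomain δ)]
      fun p => Real.exp (δ / 3 * p.2) := by
  refine isBigO_principal.2 ⟨1, fun p ⟨hΔ, ht, _⟩ => ?_⟩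
  simp only [Real.norm_eq_abs, Real.abs_exp, one_mul, Real.exp_le_exp]
  nlinarith [neg_abs_le p.1]

theorem isBigO_exp_neg_mul_one_shiftDomain (δ : ℝ) :
    (fun p : ℝ × ℝ => Real.exp (-(p.2 * p.1))) =O[𝓟 (shiftDomain δ)] fun _ => (1 : ℝ) := by
  refine isBigO_principal.2 ⟨Real.exp 1, fun p ⟨_, ht, htΔ⟩ => ?_⟩
  simp only [Real.norm_eq_abs, Real.abs_exp, abs_one, mul_one, Real.exp_le_exp]
  nlinarith [neg_abs_le p.1]

theorem isBigO_exp_neg_mul_sub_one_shiftDomain (δ : ℝ) :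
    (fun p : ℝ × ℝ => Real.exp (-(p.2 * p.1)) - 1) =O[𝓟 (shiftDomain δ)]
      fun p => p.2 * |p.1| := by
  refine isBigO_principal.2 ⟨2, fun p ⟨_, ht, htΔ⟩ => ?_⟩
  have habs : |-(p.2 * p.1)| = p.2 * |p.1| := by rw [abs_neg, abs_mul, abs_of_nonneg ht]
  rw [Real.norm_eq_abs, Real.norm_of_nonneg (mul_nonneg ht (abs_nonneg _)), ← habs]
  exact Real.abs_exp_sub_one_le (by rw [habs]; exact htΔ)

section Matrix

attribute [local instance] Matrix.frobeniusNormedAddCommGroup Matrix.frobeniusNormedRing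
  Matrix.frobeniusNormedAlgebra

variable {n : Type*} [Fintype n] [DecidableEq n]

theorem fnorm_eq_norm {m : ℕ} (M : Matrix (Fin m) (Fin m) ℝ) : fnorm M = ‖M‖ := by
  simp only [fnorm, Matrix.frobenius_norm_def, Real.norm_eq_abs, sq_abs, ← Real.sqrt_eq_rpow,
    Real.rpow_two]

section RCLike

variable {𝕂 : Type*} [RCLike 𝕂]

theorem Matrix.exp_mul_eq_tsum (X Y : Matrix n n 𝕂) :
    exp X * Y = ∑' k : ℕ, (k ! : 𝕂)⁻¹ • (X ^ k * Y) := by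
  have hsum : Summable fun k : ℕ => (k ! : 𝕂)⁻¹ • X ^ k := expSeries_summable' X
  rw [exp_eq_tsum 𝕂, ← hsum.tsum_mul_right]
  simp_rw [smul_mul_assoc]

theorem Matrix.exp_mul_eq_sum_of_pow_mul_eq_zero {X Y : Matrix n n 𝕂} {K : ℕ}
    (h : ∀ k, K ≤ k → X ^ k * Y = 0) :
    exp X * Y = ∑ k ∈ range K, (k ! : 𝕂)⁻¹ • (X ^ k * Y) := by
  rw [Matrix.exp_mul_eq_tsum]
  exact tsum_eq_sum fun k hk => by rw [h k (by simpa using hk), smul_zero]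

theorem Matrix.exp_mul_eq_exp_mul_of_pow_mul_eq {X Y Z : Matrix n n 𝕂}
    (h : ∀ k, X ^ k * Z = Y ^ k * Z) : exp X * Z = exp Y * Z := by
  simp_rw [Matrix.exp_mul_eq_tsum (𝕂 := 𝕂), h]

theorem Matrix.exp_add_smul_one (X : Matrix n n 𝕂) (c : 𝕂) : exp (X + c • 1) = exp c • exp X := by
  have h : exp (algebraMap 𝕂 (Matrix n n 𝕂) c) = algebraMap 𝕂 _ (exp c) :=
    (algebraMap_exp_comm c).symm
  rw [Matrix.exp_add_of_commute _ _ ((Commute.one_right X).smul_right c),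
    ← Algebra.algebraMap_eq_smul_one, h, Algebra.algebraMap_eq_smul_one, mul_smul_comm, mul_one]

end RCLike

theorem Matrix.expTrunc_mul_eq_exp_mul {X Y : Matrix n n ℝ} {d : ℕ}
    (h : ∀ k, d < k → X ^ k * Y = 0) :
    expTrunc d X * Y = exp X * Y := by
  rw [Matrix.exp_mul_eq_sum_of_pow_mul_eq_zero (K := d + 1) h, expTrunc, sum_mul]
  simp_rw [smul_mul_assoc]

theorem Matrix.isBigO_exp_smul_mul_of_pow_sub_smul_mul_eq_zero {M X : Matrix n n ℂ} {μ : ℂ} {k : ℕ}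
    (hX : (M - μ • 1) ^ k * X = 0) {ω : ℝ} (hμ : μ.re < ω) :
    (fun t : ℝ => exp ((t : ℂ) • M) * X) =O[𝓟 (Ici 0)] fun t => Real.exp (ω * t) := by
  set N := M - μ • 1
  have hsplit (t : ℝ) : exp ((t : ℂ) • M) * X =
      Complex.exp (t * μ) • ∑ j ∈ range k, (t : ℂ) ^ j • ((j ! : ℂ)⁻¹ • (N ^ j * X)) := by
    have hM : (t : ℂ) • M = (t : ℂ) • N + ((t : ℂ) * μ) • 1 := by
      simp [N, smul_sub, smul_smul]
    rw [hM, Matrix.exp_add_smul_one, smul_mul_assoc,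
      Matrix.exp_mul_eq_sum_of_pow_mul_eq_zero (K := k), Complex.exp_eq_exp_ℂ]
    · congr 1
      refine sum_congr rfl fun j _ => ?_
      rw [smul_pow, smul_mul_assoc, smul_comm]
    · intro j hj
      rw [smul_pow, smul_mul_assoc, pow_mul_eq_zero_of_le hj hX, smul_zero]
  have hexp : (fun t : ℝ => Complex.exp (t * μ)) =O[𝓟 (Ici 0)] fun t => Real.exp (μ.re * t) :=
    isBigO_of_le _ fun t => by simp [Complex.norm_exp, mul_comm]
  have h := hexp.smul (isBigO_sum_pow_smul (sub_pos.2 hμ) k fun j => (j ! : ℂ)⁻¹ • (N ^ j * X))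
  simp_rw [hsplit]
  refine h.congr_right fun t => ?_
  rw [smul_eq_mul, ← Real.exp_add]
  ring_nf

theorem Matrix.isBigO_exp_smul_of_forall_re_lt {M : Matrix n n ℂ} {ω : ℝ}
    (h : ∀ μ ∈ spectrum ℂ M, μ.re < ω) :
    (fun t : ℝ => exp ((t : ℂ) • M)) =O[𝓟 (Ici 0)] fun t => Real.exp (ω * t) := by
  let S : Submodule ℂ (Matrix n n ℂ) :=
    { carrier := {X | (fun t : ℝ => exp ((t : ℂ) • M) * X) =O[𝓟 (Ici 0)]
        fun t => Real.exp (ω * t)}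
      zero_mem' := by simpa using isBigO_zero _ _
      add_mem' := fun hX hY => by simpa [mul_add] using hX.add hY
      smul_mem' := fun c X hX => by
        simpa only [Set.mem_ofPred_eq, Pi.smul_def, mul_smul_comm] using hX.const_smul_left c }
  have hgen (μ : ℂ) : (Algebra.lmul ℂ (Matrix n n ℂ) M).maxGenEigenspace μ ≤ S := by
    intro X hX
    obtain ⟨k, hk⟩ := (Module.End.mem_maxGenEigenspace _ _ _).1 hX
    have hk' : (M - μ • 1) ^ k * X = 0 := by
      rwa [← map_one (Algebra.lmul ℂ (Matrix n n ℂ)), ← map_smul, ← map_sub, ← map_pow] at hk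
    by_cases hμ : μ ∈ spectrum ℂ M
    · exact Matrix.isBigO_exp_smul_mul_of_pow_sub_smul_mul_eq_zero hk' (h μ hμ)
    · have hunit : IsUnit ((M - μ • 1) ^ k) := by
        rw [spectrum.notMem_iff, Algebra.algebraMap_eq_smul_one, ← neg_sub] at hμ
        exact (IsUnit.neg_iff _ |>.1 hμ).pow k
      rw [hunit.mul_right_eq_zero.1 hk']
      exact S.zero_mem
  have hone : (1 : Matrix n n ℂ) ∈ S := by
    have htop := Module.End.iSup_maxGenEigenspace_eq_top (Algebra.lmul ℂ (Matrix n n ℂ) M)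
    exact (htop ▸ iSup_le hgen : ⊤ ≤ S) Submodule.mem_top
  simpa using (show (fun t : ℝ => exp ((t : ℂ) • M) * 1) =O[𝓟 (Ici 0)] _ from hone)

theorem Matrix.isBigO_exp_smul_of_forall_re_lt_of_real {M : Matrix n n ℝ} {ω : ℝ}
    (h : ∀ μ ∈ spectrum ℂ (M.map Complex.ofReal), μ.re < ω) :
    (fun t : ℝ => exp (t • M)) =O[𝓟 (Ici 0)] fun t => Real.exp (ω * t) := by
  let f := (Complex.ofRealAm).mapMatrix (m := n)
  have hf : Continuous f := f.toLinearMap.continuous_of_finiteDimensional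
  have hnorm (t : ℝ) : ‖exp (t • M)‖ = ‖exp ((t : ℂ) • M.map Complex.ofReal)‖ := by
    have hmap : f (exp (t • M)) = exp (f (t • M)) := map_exp_of_mem_ball f hf _
      ((expSeries_radius_eq_top ℝ (Matrix n n ℝ)).symm ▸ edist_lt_top _ _)
    rw [← Matrix.frobenius_norm_map_eq (exp (t • M)) Complex.ofReal (fun a => Complex.norm_real a)]
    change ‖f (exp (t • M))‖ = _
    rw [hmap, map_smul, Complex.coe_smul]
    rfl
  exact (isBigO_of_le _ fun t => (hnorm t).le).trans (Matrix.isBigO_exp_smul_of_forall_re_lt h)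

theorem Matrix.isBigO_exp_smul_mul_one_sub {N P : Matrix n n ℝ} {ω : ℝ} (hP : IsIdempotentElem P)
    (hNP : Commute N P) (hker : ∀ v, N *ᵥ v = 0 → (1 - P) *ᵥ v = 0)
    (hgap : ∀ μ ∈ spectrum ℂ (N.map Complex.ofReal), μ ≠ 0 → μ.re < ω) :
    (fun t : ℝ => exp (t • N) * (1 - P)) =O[𝓟 (Ici 0)] fun t => Real.exp (ω * t) := by
  set M := N * (1 - P) + (ω - 1) • P
  let f := (Complex.ofRealAm).mapMatrix (m := n)
  have hkerC (v : n → ℂ) (hv : f N *ᵥ v = 0) : (1 - f P) *ᵥ v = 0 := by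
    rw [← map_one f, ← map_sub]
    change N.map Complex.ofReal *ᵥ v = 0 at hv
    change (1 - P).map Complex.ofReal *ᵥ v = 0
    rw [Matrix.map_ofReal_mulVec_eq_zero_iff] at hv ⊢
    exact ⟨hker _ hv.1, hker _ hv.2⟩
  have hspec (μ : ℂ) (hμ : μ ∈ spectrum ℂ (M.map Complex.ofReal)) : μ.re < ω := by
    have hM : M.map Complex.ofReal = f N * (1 - f P) + ((ω - 1 : ℝ) : ℂ) • f P := by
      change f M = _
      rw [Complex.coe_smul, map_add, map_mul, map_sub, map_one, map_smul]
    rw [hM] at hμ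
    rcases Matrix.eq_or_mem_spectrum_of_mem_spectrum_mul_one_sub_add_smul (hP.map f)
      (hNP.map f) hkerC hμ with rfl | ⟨h0, hN⟩
    · simp
    · exact hgap μ hN h0
  have hMQ : M * (1 - P) = N * (1 - P) := by
    rw [add_mul, mul_assoc, hP.one_sub.eq, smul_mul_assoc, hP.mul_one_sub_self, smul_zero, add_zero]
  have hcomm : Commute M (1 - P) :=
    (Commute.one_right M).sub_right
      ((hNP.mul_left ((Commute.one_left P).sub_left (Commute.refl P))).add_left
        ((Commute.refl P).smul_left _))
  have hexp (t : ℝ) : exp (t • N) * (1 - P) = exp (t • M) * (1 - P) :=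
    Matrix.exp_mul_eq_exp_mul_of_pow_mul_eq (𝕂 := ℝ) (pow_mul_eq_pow_mul_of_mul_eq
      (hcomm.smul_left t) (by rw [smul_mul_assoc, smul_mul_assoc, hMQ]))
  simp_rw [hexp]
  exact (isBigO_of_le' (c := ‖1 - P‖) _ fun t => (norm_mul_le _ _).trans_eq (mul_comm _ _)).trans
    (Matrix.isBigO_exp_smul_of_forall_re_lt_of_real hspec)

theorem isBigO_sub_smul_one_shiftDomain (N : Matrix n n ℝ) (δ : ℝ) :
    (fun p : ℝ × ℝ => N - p.1 • (1 : Matrix n n ℝ)) =O[𝓟 (shiftDomain δ)] fun _ => (1 : ℝ) := by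
  refine isBigO_principal.2 ⟨‖N‖ + δ / 3 * ‖(1 : Matrix n n ℝ)‖, fun p hp => ?_⟩
  calc ‖N - p.1 • (1 : Matrix n n ℝ)‖ ≤ ‖N‖ + |p.1| * ‖(1 : Matrix n n ℝ)‖ := by
        rw [← Real.norm_eq_abs, ← norm_smul]
        exact norm_sub_le _ _
    _ ≤ (‖N‖ + δ / 3 * ‖(1 : Matrix n n ℝ)‖) * ‖(1 : ℝ)‖ := by
        rw [norm_one (α := ℝ), mul_one]
        gcongr
        exact hp.1.le

theorem Matrix.exp_smul_sub_smul_one (N : Matrix n n ℝ) (c t : ℝ) :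
    exp (t • (N - c • 1)) = Real.exp (-(t * c)) • exp (t • N) := by
  rw [smul_sub, smul_smul, sub_eq_add_neg, ← neg_smul, Matrix.exp_add_smul_one, Real.exp_eq_exp_ℝ]

theorem isBigO_expTrunc_mul_exp_mul_one_sub {N P : Matrix n n ℝ} {δ : ℝ} (d : ℕ)
    (hdecay : (fun t : ℝ => exp (t • N) * (1 - P)) =O[𝓟 (Ici 0)] fun t => Real.exp (-δ * t)) :
    (fun p : ℝ × ℝ => expTrunc d ((-p.2) • (N - p.1 • 1)) * (exp (p.2 • (N - p.1 • 1)) * (1 - P)))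
      =O[𝓟 (shiftDomain δ)] fun p => (1 + p.2 ^ d) * Real.exp (-(2 / 3) * δ * p.2) := by
  have hdecay' : (fun p : ℝ × ℝ => exp (p.2 • N) * (1 - P)) =O[𝓟 (shiftDomain δ)]
      fun p => Real.exp (-δ * p.2) :=
    hdecay.comp_tendsto (tendsto_principal_principal.2 fun p hp => hp.2.1)
  have h := (isBigO_expTrunc_smul (isBigO_sub_smul_one_shiftDomain N δ) (fun p => -p.2) d).mul
    ((isBigO_exp_neg_mul_shiftDomain δ).smul hdecay')
  simp_rw [Matrix.exp_smul_sub_smul_one, smul_mul_assoc]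
  refine h.congr' .rfl (eventually_principal.2 fun p ⟨_, ht, _⟩ => ?_)
  dsimp only
  rw [norm_neg, Real.norm_of_nonneg ht, smul_eq_mul, ← Real.exp_add]
  ring_nf

theorem Matrix.smul_pow_mul_eq_zero {N P : Matrix n n ℝ} {ν k : ℕ} (hNν : N ^ ν * P = 0)
    (hk : ν ≤ k) (τ : ℝ) : (τ • N) ^ k * P = 0 := by
  rw [smul_pow, smul_mul_assoc, pow_mul_eq_zero_of_le hk hNν, smul_zero]

theorem Matrix.isBigO_exp_smul_mul_of_pow_mul_eq_zero {α : Type*} {l : Filter α}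
    {N P : Matrix n n ℝ} {ν : ℕ} (hNν : N ^ ν * P = 0) (τ : α → ℝ) :
    (fun a => exp (τ a • N) * P) =O[l] fun a => 1 + ‖τ a‖ ^ (ν - 1) := by
  have h := (isBigO_expTrunc_smul (isBigO_const_const N one_ne_zero l) τ (ν - 1)).mul
    (isBigO_const_const P (one_ne_zero (α := ℝ)) l)
  have hexp (t : ℝ) : expTrunc (ν - 1) (t • N) * P = exp (t • N) * P :=
    Matrix.expTrunc_mul_eq_exp_mul fun k hk => Matrix.smul_pow_mul_eq_zero hNν (by omega) t
  simpa only [mul_one, hexp] using h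

theorem Matrix.expTrunc_neg_smul_mul_exp_smul_mul {N P : Matrix n n ℝ} {ν d : ℕ}
    (hNν : N ^ ν * P = 0) (hd : ν - 1 ≤ d) (t : ℝ) :
    expTrunc d ((-t) • N) * (exp (t • N) * P) = P := by
  have hcomm : Commute ((-t) • N) (t • N) := ((Commute.refl N).smul_left _).smul_right _
  rw [Matrix.expTrunc_mul_eq_exp_mul, ← mul_assoc, ← Matrix.exp_add_of_commute _ _ hcomm,
    neg_smul, neg_add_cancel, NormedSpace.exp_zero, one_mul]
  intro k hk
  rw [← mul_assoc, (hcomm.pow_left k).exp_right.eq, mul_assoc,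
    Matrix.smul_pow_mul_eq_zero hNν (by omega), mul_zero]

theorem isBigO_expTrunc_mul_exp_mul_sub {N P : Matrix n n ℝ} {δ : ℝ} {ν d : ℕ}
    (hNν : N ^ ν * P = 0) (hν : 0 < ν) (hd : ν - 1 ≤ d) :
    (fun p : ℝ × ℝ => expTrunc d ((-p.2) • (N - p.1 • 1)) * (exp (p.2 • (N - p.1 • 1)) * P) - P)
      =O[𝓟 (shiftDomain δ)] fun p => (1 + p.2 ^ (d + ν)) * |p.1| := by
  have hsplit (p : ℝ × ℝ) :
      expTrunc d ((-p.2) • (N - p.1 • 1)) * (exp (p.2 • (N - p.1 • 1)) * P) - P =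
        Real.exp (-(p.2 * p.1)) • ((expTrunc d ((-p.2) • (N - p.1 • 1)) -
          expTrunc d ((-p.2) • N)) * (exp (p.2 • N) * P)) + (Real.exp (-(p.2 * p.1)) - 1) • P := by
    rw [Matrix.exp_smul_sub_smul_one, sub_mul, Matrix.expTrunc_neg_smul_mul_exp_smul_mul hNν hd,
      smul_mul_assoc, mul_smul_comm]
    module
  have hP : (fun _ : ℝ × ℝ => P) =O[𝓟 (shiftDomain δ)] fun _ => (1 : ℝ) :=
    isBigO_const_const _ one_ne_zero _
  have hdiff := isBigO_expTrunc_smul_sub (isBigO_sub_smul_one_shiftDomain N δ)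
    (isBigO_const_const N one_ne_zero _)
    (fun p => (Commute.refl N).sub_left ((Commute.one_left N).smul_left p.1)) (fun p => -p.2) d
  have hS := Matrix.isBigO_exp_smul_mul_of_pow_mul_eq_zero (l := 𝓟 (shiftDomain δ)) hNν (·.2)
  simp_rw [hsplit]
  refine (((isBigO_exp_neg_mul_one_shiftDomain δ).smul (hdiff.mul hS)).trans ?_).add
    (((isBigO_exp_neg_mul_sub_one_shiftDomain δ).smul hP).trans ?_)
  · refine isBigO_principal.2 ⟨4 * ‖(1 : Matrix n n ℝ)‖, fun p ⟨_, ht, _⟩ => ?_⟩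
    have hpoly := one_add_pow_mul_one_add_pow_le ht (a := d) (b := ν - 1) (n := d + ν) (by omega)
    have hnorm : ‖N - p.1 • 1 - N‖ = |p.1| * ‖(1 : Matrix n n ℝ)‖ := by
      rw [sub_sub_cancel_left, norm_neg, norm_smul, Real.norm_eq_abs]
    simp only [hnorm, norm_neg, Real.norm_of_nonneg ht, smul_eq_mul, one_mul]
    rw [Real.norm_of_nonneg (by positivity), Real.norm_of_nonneg (by positivity)]
    calc (1 + p.2 ^ d) * (|p.1| * ‖(1 : Matrix n n ℝ)‖) * (1 + p.2 ^ (ν - 1))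
        = |p.1| * ‖(1 : Matrix n n ℝ)‖ * ((1 + p.2 ^ d) * (1 + p.2 ^ (ν - 1))) := by ring
      _ ≤ |p.1| * ‖(1 : Matrix n n ℝ)‖ * (4 * (1 + p.2 ^ (d + ν))) := by gcongr
      _ = 4 * ‖(1 : Matrix n n ℝ)‖ * ((1 + p.2 ^ (d + ν)) * |p.1|) := by ring
  · refine isBigO_principal.2 ⟨1, fun p ⟨_, ht, _⟩ => ?_⟩
    have hpoly := pow_le_one_add_pow ht (k := 1) (n := d + ν) (by omega)
    rw [pow_one] at hpoly
    rw [smul_eq_mul, mul_one, Real.norm_of_nonneg (by positivity), one_mul,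
      Real.norm_of_nonneg (by positivity)]
    gcongr

theorem exists_pos_fnorm_mul_le_of_isBigO {m : ℕ} {α : Type*} {D : Set α}
    {F : α → Matrix (Fin m) (Fin m) ℝ} {g : α → ℝ} (h : F =O[𝓟 D] g) (hg : ∀ a ∈ D, 0 ≤ g a) :
    ∃ C > 0, ∀ a ∈ D, ∀ V, fnorm (F a * V) ≤ C * fnorm V * g a := by
  obtain ⟨C, hC⟩ := isBigO_principal.1 h
  refine ⟨max C 1, by positivity, fun a ha V => ?_⟩
  have hCa : ‖F a‖ ≤ max C 1 * g a := by
    simpa [Real.norm_of_nonneg (hg a ha)] using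
      (hC a ha).trans (mul_le_mul_of_nonneg_right (le_max_left C 1) (norm_nonneg _))
  rw [fnorm_eq_norm, fnorm_eq_norm]
  calc ‖F a * V‖ ≤ ‖F a‖ * ‖V‖ := norm_mul_le _ _
    _ ≤ max C 1 * g a * ‖V‖ := by gcongr
    _ = max C 1 * ‖V‖ * g a := by ring

end Matrix

theorem stmt19_general {m : ℕ} (A : Matrix (Fin m) (Fin m) ℝ) (s : ℝ)
    (δ : ℝ) (hδ : 0 < δ)
    (hgap : ∀ μ ∈ spectrum ℂ (A.map Complex.ofReal), μ ≠ (s : ℂ) → μ.re ≤ s - 2 * δ)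
    (ν : ℕ) (hν : 0 < ν)
    (hann : ∀ x ∈ GEsub A s, ((A - s • 1) ^ ν).mulVec x = 0)
    (P : Matrix (Fin m) (Fin m) ℝ)
    (hPidem : P * P = P) (hPcomm : P * A = A * P)
    (hPrange : Set.range P.mulVec = (GEsub A s : Set (Fin m → ℝ)))
    (d : ℕ) (hd1 : ν - 1 ≤ d) :
    ∃ C : ℝ, 0 < C ∧
      ∀ V : Matrix (Fin m) (Fin m) ℝ, ∀ Δs : ℝ, |Δs| < δ / 3 →
        ∀ t : ℝ, 0 ≤ t → t * |Δs| ≤ 1 →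
          fnorm ((∑ k ∈ Finset.range (d + 1),
                ((-1 : ℝ) ^ k * t ^ k / (Nat.factorial k : ℝ)) • (A - (s + Δs) • 1) ^ k) *
              (mexp (t • (A - (s + Δs) • 1)) * V) -
            (∑ k ∈ Finset.range (d + 1),
                ((-1 : ℝ) ^ k * t ^ k / (Nat.factorial k : ℝ)) • (A - (s + Δs) • 1) ^ k) *
              (mexp (t • (A - (s + Δs) • 1)) * (P * V)))
            ≤ C * fnorm V * (1 + t ^ d) * Real.exp (-(2 / 3) * δ * t) ∧
          fnorm ((∑ k ∈ Finset.range (d + 1),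
                ((-1 : ℝ) ^ k * t ^ k / (Nat.factorial k : ℝ)) • (A - (s + Δs) • 1) ^ k) *
              (mexp (t • (A - (s + Δs) • 1)) * (P * V)) - P * V)
            ≤ C * fnorm V * (1 + t ^ (d + ν)) * |Δs| := by
  have hNP : Commute (A - s • 1) P :=
    (show Commute A P from hPcomm.symm).sub_left ((Commute.one_left P).smul_left s)
  have hdecay := Matrix.isBigO_exp_smul_mul_one_sub hPidem hNP
    (one_sub_mulVec_eq_zero_of_range_eq_GEsub hPidem hPrange)
    (Matrix.re_lt_of_mem_spectrum_map_sub_smul_one hδ hgap)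
  obtain ⟨C₁, hC₁, h₁⟩ := exists_pos_fnorm_mul_le_of_isBigO
    (isBigO_expTrunc_mul_exp_mul_one_sub d hdecay) fun p hp => by
    have := hp.2.1; positivity
  obtain ⟨C₂, hC₂, h₂⟩ := exists_pos_fnorm_mul_le_of_isBigO (D := shiftDomain δ)
    (isBigO_expTrunc_mul_exp_mul_sub (pow_sub_smul_one_mul_eq_zero_of_range_eq_GEsub hann hPrange)
      hν hd1) fun p hp => by
    have := hp.2.1; positivity
  refine ⟨C₁ + C₂, by positivity, fun V Δs hΔs t ht htΔs => ?_⟩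
  have hp : (Δs, t) ∈ shiftDomain δ := ⟨hΔs, ht, htΔs⟩
  have hV : 0 ≤ fnorm V := Real.sqrt_nonneg _
  rw [show A - (s + Δs) • 1 = A - s • 1 - Δs • 1 by rw [add_smul, sub_add_eq_sub_sub],
    ← expTrunc_neg_smul, mexp]
  constructor
  · calc _ = fnorm (expTrunc d ((-t) • (A - s • 1 - Δs • 1)) *
            (exp (t • (A - s • 1 - Δs • 1)) * (1 - P)) * V) := by congr 1; noncomm_ring
      _ ≤ C₁ * fnorm V * ((1 + t ^ d) * Real.exp (-(2 / 3) * δ * t)) := h₁ _ hp V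
      _ ≤ _ := by rw [← mul_assoc]; gcongr; linarith
  · calc _ = fnorm ((expTrunc d ((-t) • (A - s • 1 - Δs • 1)) *
            (exp (t • (A - s • 1 - Δs • 1)) * P) - P) * V) := by congr 1; noncomm_ring
      _ ≤ C₂ * fnorm V * ((1 + t ^ (d + ν)) * |Δs|) := h₂ _ hp V
      _ ≤ _ := by rw [← mul_assoc]; gcongr; linarith

/-- For Perron-like A with principal eigenvalue s, spectral gap δ > 0
(Re μ ≤ s − 2δ for complex eigenvalues μ ≠ s), cyclic order ν, spectral projection P onto
GE_s(A), and ν − 1 ≤ d ≤ m − 1, there is C > 0 such that for every V, every Δs with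
|Δs| < δ/3 and every t ≥ 0 with t|Δs| ≤ 1, writing s̄ = s + Δs,
P̄(t) = ∑_{k=0}^d (−1)^k(t^k/k!)(A−s̄I)^k, X̄(t) = e^{t(A−s̄I)}V, Ỹ(t) = P̄(t)X̄(t),
Ȳ(t) = P̄(t)e^{t(A−s̄I)}(PV): (i) ‖Ỹ(t) − Ȳ(t)‖ ≤ C‖V‖(1+t^d)e^{−(2/3)δt} and
(ii) ‖Ȳ(t) − PV‖ ≤ C‖V‖(1+t^{d+ν})|Δs|. -/
theorem stmt19 {m : ℕ} (A : Matrix (Fin m) (Fin m) ℝ) (s : ℝ)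
    (hs : s ∈ spectrum ℝ A)
    (δ : ℝ) (hδ : 0 < δ)
    (hgap : ∀ μ ∈ spectrum ℂ (A.map Complex.ofReal), μ ≠ (s : ℂ) → μ.re ≤ s - 2 * δ)
    (ν : ℕ) (hν : 0 < ν)
    (hann : ∀ x ∈ GEsub A s, ((A - s • 1) ^ ν).mulVec x = 0)
    (hmin : ∀ k : ℕ, 0 < k → (∀ x ∈ GEsub A s, ((A - s • 1) ^ k).mulVec x = 0) → ν ≤ k)
    (P : Matrix (Fin m) (Fin m) ℝ)
    (hPidem : P * P = P) (hPcomm : P * A = A * P)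
    (hPrange : Set.range P.mulVec = (GEsub A s : Set (Fin m → ℝ)))
    (d : ℕ) (hd1 : ν - 1 ≤ d) (hd2 : d ≤ m - 1) :
    ∃ C : ℝ, 0 < C ∧
      ∀ V : Matrix (Fin m) (Fin m) ℝ, ∀ Δs : ℝ, |Δs| < δ / 3 →
        ∀ t : ℝ, 0 ≤ t → t * |Δs| ≤ 1 →
          fnorm ((∑ k ∈ Finset.range (d + 1),
                ((-1 : ℝ) ^ k * t ^ k / (Nat.factorial k : ℝ)) • (A - (s + Δs) • 1) ^ k) *
              (mexp (t • (A - (s + Δs) • 1)) * V) -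
            (∑ k ∈ Finset.range (d + 1),
                ((-1 : ℝ) ^ k * t ^ k / (Nat.factorial k : ℝ)) • (A - (s + Δs) • 1) ^ k) *
              (mexp (t • (A - (s + Δs) • 1)) * (P * V)))
            ≤ C * fnorm V * (1 + t ^ d) * Real.exp (-(2 / 3) * δ * t) ∧
          fnorm ((∑ k ∈ Finset.range (d + 1),
                ((-1 : ℝ) ^ k * t ^ k / (Nat.factorial k : ℝ)) • (A - (s + Δs) • 1) ^ k) *
              (mexp (t • (A - (s + Δs) • 1)) * (P * V)) - P * V)
            ≤ C * fnorm V * (1 + t ^ (d + ν)) * |Δs| :=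
  stmt19_general A s δ hδ hgap ν hν hann P hPidem hPcomm hPrange d hd1
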